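/- Let G be a finite connected network and let P_1,...,P_k be collections of paths such that for every choice of one path P_i from each P_i, the union of the P_i (as subgraphs) contains a path from u to v. Then R_G(u,v) <= sum_{i=1}^k R_G(P_i), where R_G(P_i) denotes the effective resistance restricted to the collection P_i. -/

import Mathlib

open Finset

variable {V : Type} [Fintype V] [DecidableEq V]

/-- `p` is a path from `u` to `v`. -/
def IsPathBetween (adj : V → V → Prop) (u v : V) (p : List V) : Prop :=
  p ≠ [] ∧ p.head? = some u ∧ p.getLast? = some v ∧ p.Chain' adj

/-- `p` is a path (a nonempty list of consecutively adjacent vertices). -/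
def IsPath (adj : V → V → Prop) (p : List V) : Prop :=
  p ≠ [] ∧ p.Chain' adj

/-- Energy of a flow (each unoriented edge counted once). -/
noncomputable def flowEnergy (r : V → V → ℝ) (θ : V → V → ℝ) : ℝ :=
  (1 / 2) * ∑ x, ∑ y, r x y * (θ x y) ^ 2

/-- `θ` is a unit flow from `u` to `v`. -/
def IsUnitFlow (adj : V → V → Prop) (u v : V) (θ : V → V → ℝ) : Prop :=
  (∀ x y, θ x y = -θ y x) ∧ (∀ x y, ¬ adj x y → θ x y = 0) ∧
  (∀ x, x ≠ u → x ≠ v → ∑ y, θ x y = 0) ∧ (∑ y, θ u y = 1)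

/-- Effective resistance via the flow variational formula. -/
noncomputable def effRes (adj : V → V → Prop) (r : V → V → ℝ) (u v : V) : ℝ :=
  sInf { E : ℝ | ∃ θ : V → V → ℝ, IsUnitFlow adj u v θ ∧ E = flowEnergy r θ }

/-- Sum of `w` over the consecutive edges of the path `p`. -/
noncomputable def pathSum (p : List V) (w : V → V → ℝ) : ℝ :=
  ((p.zip p.tail).map fun e => w e.1 e.2).sum

/-- The effective resistance restricted to a collection `Ps` of paths: the infimum over
admissible positive symmetric splittings `(rP p)` of the edge resistances satisfying
`∑_{p ∈ Ps} (rP p x y)⁻¹ ≤ (r x y)⁻¹` on every edge, of the parallel combination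
`(∑_{p ∈ Ps} (resistance of p)⁻¹)⁻¹`. -/
noncomputable def restrictedResP (adj : V → V → Prop) (r : V → V → ℝ)
    (Ps : Finset (List V)) : ℝ :=
  sInf { y : ℝ | ∃ rP : List V → V → V → ℝ,
    (∀ p ∈ Ps, ∀ x y, adj x y → 0 < rP p x y) ∧
    (∀ p ∈ Ps, ∀ x y, rP p x y = rP p y x) ∧
    (∀ x y, adj x y → ∑ p ∈ Ps, (rP p x y)⁻¹ ≤ (r x y)⁻¹) ∧
    y = (∑ p ∈ Ps, (pathSum p (rP p))⁻¹)⁻¹ }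

/-!
Let `φ` be the potential with `φ u = 0`, `φ v = 1` minimizing the Dirichlet energy `E`. It is
harmonic off `{u, v}`, so its current divided by `E` is a unit flow of energy `1 / E`, whence
`R(u, v) ≤ 1 / E`.

Cut `[0, 1)` into levels `t` of width `ℓ t` at the values of `φ`. Any path from `u` to `v` crosses
every level, so by the covering hypothesis, at each level some collection `Ps i` has all of its
paths crossing it. Given admissible splittings `ρ`, charge to a path `p` at level `t` the
resistance `∑ ρ p e / |Δφ e|` of its edges `e` crossing `t`. As the whole current `E` passes
through the cut `{φ ≤ t}`, the parallel connection of these resistances over `Ps i` is at least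
`1 / E`. Hence `1 / E = ∑ ℓ t / E` is bounded by the sum over `i` of the series connections over
the levels of these parallel connections, scaled by `ℓ t`. By superadditivity of parallel sums
(Sedrakyan's inequality), and since the level resistances of `p` weighted by `ℓ` add up to at
most its resistance, each of these is at most the parallel connection of the paths of `Ps i`.
-/

theorem List.isChain_iff_forall_mem_zip_tail {α : Type*} {R : α → α → Prop} :
    ∀ {l : List α}, l.IsChain R ↔ ∀ e ∈ l.zip l.tail, R e.1 e.2
  | [] | [_] => by simp
  | a :: b :: l => by
    simp [List.isChain_iff_forall_mem_zip_tail (l := b :: l)]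

theorem List.exists_mem_zip_tail_of_head?_of_getLast? {α : Type*} {P : α → Prop} {l : List α}
    {a b : α} (ha : l.head? = some a) (hb : l.getLast? = some b) (hPa : P a) (hPb : ¬ P b) :
    ∃ e ∈ l.zip l.tail, P e.1 ∧ ¬ P e.2 := by
  by_contra! h
  have hchain : l.IsChain (fun x y => P x → P y) := List.isChain_iff_forall_mem_zip_tail.mpr h
  refine hPb (hchain.induction P l (fun _ _ h => h) (fun hl => ?_) b (List.mem_of_getLast? hb))
  rwa [(List.head_eq_iff_head?_eq_some hl).mpr ha]

theorem IsPathBetween.induction {α : Type} {adj : α → α → Prop} {x y : α} {p : List α}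
    (hp : IsPathBetween adj x y p) (P : α → Prop) (hx : P x)
    (hstep : ∀ a b, adj a b → P a → P b) : P y := by
  obtain ⟨-, hhead, hlast, hchain⟩ := hp
  refine hchain.induction P p hstep (fun hl => ?_) y (List.mem_of_getLast? hlast)
  rwa [(List.head_eq_iff_head?_eq_some hl).mpr hhead]

section PathSum

variable {α : Type} {p : List α} {w w' : α → α → ℝ}

theorem pathSum_nonneg (hw : ∀ e ∈ p.zip p.tail, 0 ≤ w e.1 e.2) : 0 ≤ pathSum p w :=
  List.sum_nonneg fun _ ht => by
    obtain ⟨e, he, rfl⟩ := List.mem_map.mp ht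
    exact hw e he

theorem le_pathSum (hw : ∀ e ∈ p.zip p.tail, 0 ≤ w e.1 e.2) {e : α × α}
    (he : e ∈ p.zip p.tail) : w e.1 e.2 ≤ pathSum p w :=
  List.single_le_sum (fun _ ht => by
    obtain ⟨e, he, rfl⟩ := List.mem_map.mp ht
    exact hw e he) _ (List.mem_map_of_mem he)

theorem pathSum_le_pathSum (h : ∀ e ∈ p.zip p.tail, w e.1 e.2 ≤ w' e.1 e.2) :
    pathSum p w ≤ pathSum p w' :=
  List.sum_le_sum h

theorem sum_mul_pathSum {ι : Type*} (s : Finset ι) (a : ι → ℝ) (f : ι → α → α → ℝ) :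
    ∑ i ∈ s, a i * pathSum p (f i) = pathSum p (fun x y => ∑ i ∈ s, a i * f i x y) := by
  classical
  simp only [pathSum, ← List.sum_map_mul_left]
  induction s using Finset.induction_on with
  | empty => simp
  | insert i s hi ih => simp only [Finset.sum_insert hi, ih, List.sum_map_add]

end PathSum

section ParallelSum

variable {ι κ : Type*} {s : Finset ι} {a b : ι → ℝ}

noncomputable def parallelSum (s : Finset ι) (a : ι → ℝ) : ℝ := (∑ i ∈ s, (a i)⁻¹)⁻¹

theorem parallelSum_nonneg (ha : ∀ i ∈ s, 0 ≤ a i) : 0 ≤ parallelSum s a :=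
  inv_nonneg.mpr (Finset.sum_nonneg fun i hi => inv_nonneg.mpr (ha i hi))

theorem parallelSum_pos (hs : s.Nonempty) (ha : ∀ i ∈ s, 0 < a i) : 0 < parallelSum s a :=
  inv_pos.mpr (Finset.sum_pos (fun i hi => inv_pos.mpr (ha i hi)) hs)

theorem parallelSum_const_mul (t : ℝ) (a : ι → ℝ) :
    parallelSum s (fun i => t * a i) = t * parallelSum s a := by
  simp only [parallelSum, mul_inv, ← Finset.mul_sum, inv_inv]

theorem parallelSum_le_parallelSum (ha : ∀ i ∈ s, 0 < a i) (hab : ∀ i ∈ s, a i ≤ b i) :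
    parallelSum s a ≤ parallelSum s b := by
  rcases s.eq_empty_or_nonempty with rfl | hs
  · simp [parallelSum]
  have hb : ∀ i ∈ s, 0 < b i := fun i hi => (ha i hi).trans_le (hab i hi)
  exact inv_anti₀ (Finset.sum_pos (fun i hi => inv_pos.mpr (hb i hi)) hs)
    (Finset.sum_le_sum fun i hi => inv_anti₀ (ha i hi) (hab i hi))

theorem sum_parallelSum_le_parallelSum_sum (t : Finset κ) (a : κ → ι → ℝ)
    (ha : ∀ k ∈ t, ∀ i ∈ s, 0 < a k i) :
    ∑ k ∈ t, parallelSum s (a k) ≤ parallelSum s (fun i => ∑ k ∈ t, a k i) := by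
  rcases s.eq_empty_or_nonempty with rfl | hs
  · simp [parallelSum]
  rcases t.eq_empty_or_nonempty with rfl | ht
  · simp [parallelSum]
  set H := fun k => parallelSum s (a k)
  set S := ∑ k ∈ t, H k
  have hH : ∀ k ∈ t, 0 < H k := fun k hk => parallelSum_pos hs (ha k hk)
  have hS : 0 < S := Finset.sum_pos hH ht
  have hsum : ∀ i ∈ s, 0 < ∑ k ∈ t, a k i := fun i hi => Finset.sum_pos (ha · · i hi) ht
  -- Sedrakyan's inequality at each `i`, with weights `H k`, then summed over `i`.
  have key : S ^ 2 * ∑ i ∈ s, (∑ k ∈ t, a k i)⁻¹ ≤ S := calc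
    S ^ 2 * ∑ i ∈ s, (∑ k ∈ t, a k i)⁻¹ = ∑ i ∈ s, S ^ 2 / ∑ k ∈ t, a k i := by
      simp only [Finset.mul_sum, div_eq_mul_inv]
    _ ≤ ∑ i ∈ s, ∑ k ∈ t, H k ^ 2 / a k i :=
      Finset.sum_le_sum fun i hi => Finset.sq_sum_div_le_sum_sq_div t H (ha · · i hi)
    _ = ∑ k ∈ t, H k ^ 2 * (H k)⁻¹ := by
      rw [Finset.sum_comm]
      refine Finset.sum_congr rfl fun k _ => ?_
      simp only [H, parallelSum, inv_inv, Finset.mul_sum, div_eq_mul_inv]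
    _ = S := Finset.sum_congr rfl fun k hk => by field_simp [(hH k hk).ne']
  have hpos : 0 < ∑ i ∈ s, (∑ k ∈ t, a k i)⁻¹ :=
    Finset.sum_pos (fun i hi => inv_pos.mpr (hsum i hi)) hs
  rw [parallelSum, le_inv_comm₀ hS hpos]
  calc ∑ i ∈ s, (∑ k ∈ t, a k i)⁻¹ = S ^ 2 * (∑ i ∈ s, (∑ k ∈ t, a k i)⁻¹) / S ^ 2 := by
        field_simp
    _ ≤ S / S ^ 2 := by gcongr
    _ = S⁻¹ := by field_simp

theorem sum_parallelSum_le_parallelSum_of_sum_le (t : Finset κ) (a : κ → ι → ℝ)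
    (ha : ∀ k ∈ t, ∀ i ∈ s, 0 < a k i) (hab : ∀ i ∈ s, ∑ k ∈ t, a k i ≤ b i) :
    ∑ k ∈ t, parallelSum s (a k) ≤ parallelSum s b := by
  rcases t.eq_empty_or_nonempty with rfl | ht
  · simpa using parallelSum_nonneg fun i hi => by simpa using hab i hi
  exact (sum_parallelSum_le_parallelSum_sum t a ha).trans <| parallelSum_le_parallelSum
    (fun i hi => Finset.sum_pos (ha · · i hi) ht) hab

end ParallelSum

section Dirichlet

variable {α : Type*} [Fintype α] (c : α → α → ℝ)

noncomputable def dirichletForm (φ ψ : α → ℝ) : ℝ :=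
  (1 / 2) * ∑ x, ∑ y, c x y * (φ y - φ x) * (ψ y - ψ x)

/-- The graph Laplacian; `c x y * (φ y - φ x)` is read as the current from `x` to `y`. -/
noncomputable def laplacian (φ : α → ℝ) (x : α) : ℝ := ∑ y, c x y * (φ y - φ x)

variable {c}

theorem dirichletForm_add_mul_self (φ ψ : α → ℝ) (s : ℝ) :
    dirichletForm c (fun x => φ x + s * ψ x) (fun x => φ x + s * ψ x) =
      dirichletForm c φ φ + 2 * s * dirichletForm c φ ψ + s ^ 2 * dirichletForm c ψ ψ := by
  simp only [dirichletForm, Finset.mul_sum, ← Finset.sum_add_distrib]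
  exact Finset.sum_congr rfl fun x _ => Finset.sum_congr rfl fun y _ => by ring

theorem continuous_dirichletForm_self : Continuous fun φ : α → ℝ => dirichletForm c φ φ := by
  unfold dirichletForm
  fun_prop

theorem mul_sq_sub_le_dirichletForm (hc : ∀ x y, 0 ≤ c x y) (φ : α → ℝ) (x y : α) :
    c x y * (φ y - φ x) ^ 2 ≤ 2 * dirichletForm c φ φ := by
  have hterm : ∀ a b, 0 ≤ c a b * (φ b - φ a) * (φ b - φ a) := fun a b => by
    rw [mul_assoc]; exact mul_nonneg (hc a b) (mul_self_nonneg _)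
  calc c x y * (φ y - φ x) ^ 2 = c x y * (φ y - φ x) * (φ y - φ x) := by ring
    _ ≤ ∑ b, c x b * (φ b - φ x) * (φ b - φ x) :=
      Finset.single_le_sum (fun b _ => hterm x b) (Finset.mem_univ y)
    _ ≤ ∑ a, ∑ b, c a b * (φ b - φ a) * (φ b - φ a) :=
      Finset.single_le_sum (f := fun a => ∑ b, c a b * (φ b - φ a) * (φ b - φ a))
        (fun a _ => Finset.sum_nonneg fun b _ => hterm a b) (Finset.mem_univ x)
    _ = 2 * dirichletForm c φ φ := by rw [dirichletForm]; ring

theorem dirichletForm_eq_neg_sum_mul_laplacian (hc : ∀ x y, c x y = c y x) (φ ψ : α → ℝ) :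
    dirichletForm c φ ψ = -∑ x, ψ x * laplacian c φ x := by
  have hswap : ∑ x, ∑ y, c x y * (φ y - φ x) * ψ y = -∑ x, ∑ y, c x y * (φ y - φ x) * ψ x := by
    rw [Finset.sum_comm, ← Finset.sum_neg_distrib]
    refine Finset.sum_congr rfl fun x _ => ?_
    rw [← Finset.sum_neg_distrib]
    exact Finset.sum_congr rfl fun y _ => by rw [hc]; ring
  calc dirichletForm c φ ψ
      = (1 / 2) * (∑ x, ∑ y, c x y * (φ y - φ x) * ψ y -
        ∑ x, ∑ y, c x y * (φ y - φ x) * ψ x) := by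
        simp only [dirichletForm, mul_sub, Finset.sum_sub_distrib]
    _ = -∑ x, ∑ y, c x y * (φ y - φ x) * ψ x := by rw [hswap]; ring
    _ = -∑ x, ψ x * laplacian c φ x := by
        simp only [laplacian, Finset.mul_sum]
        exact congrArg _ (Finset.sum_congr rfl fun x _ => Finset.sum_congr rfl fun y _ => by ring)

theorem sum_laplacian_eq_zero (hc : ∀ x y, c x y = c y x) (φ : α → ℝ) :
    ∑ x, laplacian c φ x = 0 := by
  simpa [dirichletForm] using (dirichletForm_eq_neg_sum_mul_laplacian hc φ fun _ => 1).symm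

theorem laplacian_eq_zero_of_forall_le (hc : ∀ x y, c x y = c y x) {u v : α} {φ : α → ℝ}
    (hmin : ∀ ψ : α → ℝ, ψ u = φ u → ψ v = φ v → dirichletForm c φ φ ≤ dirichletForm c ψ ψ)
    {x : α} (hxu : x ≠ u) (hxv : x ≠ v) : laplacian c φ x = 0 := by
  classical
  set δ : α → ℝ := Pi.single x 1
  have hδ : dirichletForm c φ δ = -laplacian c φ x := by
    rw [dirichletForm_eq_neg_sum_mul_laplacian hc, Fintype.sum_eq_single x fun y hy => by
      simp [δ, hy]]
    simp [δ]
  -- `s ↦ D(φ + s δ)` is a quadratic polynomial minimal at `s = 0`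
  have hquad : ∀ s : ℝ, 0 ≤ dirichletForm c δ δ * (s * s) + 2 * dirichletForm c φ δ * s + 0 := by
    intro s
    have := hmin (fun y => φ y + s * δ y) (by simp [δ, hxu.symm]) (by simp [δ, hxv.symm])
    rw [dirichletForm_add_mul_self] at this
    linarith
  have := discrim_le_zero hquad
  rw [discrim] at this
  nlinarith [sq_nonneg (dirichletForm c φ δ)]

theorem laplacian_eq_dirichletForm (hsymm : ∀ x y, c x y = c y x) {u v : α} {φ : α → ℝ}
    (hharm : ∀ x, x ≠ u → x ≠ v → laplacian c φ x = 0) (hu : φ u = 0) (hv : φ v = 1) :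
    laplacian c φ u = dirichletForm c φ φ := by
  have huv : u ≠ v := fun h => by simp [h, hv] at hu
  have hv' : dirichletForm c φ φ = -laplacian c φ v := by
    rw [dirichletForm_eq_neg_sum_mul_laplacian hsymm, Fintype.sum_eq_single v fun x hxv => ?_, hv,
      one_mul]
    by_cases hxu : x = u
    · rw [hxu, hu, zero_mul]
    · rw [hharm x hxu hxv, mul_zero]
  have := sum_laplacian_eq_zero hsymm φ
  rw [Fintype.sum_eq_add u v huv fun x hx => hharm x hx.1 hx.2] at this
  linarith

theorem sum_sum_compl_mul_sub_eq_laplacian [DecidableEq α] (hsymm : ∀ x y, c x y = c y x)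
    {u v : α} {φ : α → ℝ} (hharm : ∀ x, x ≠ u → x ≠ v → laplacian c φ x = 0) {A : Finset α}
    (huA : u ∈ A) (hvA : v ∉ A) : ∑ x ∈ A, ∑ y ∈ Aᶜ, c x y * (φ y - φ x) = laplacian c φ u := by
  have hinner : ∑ x ∈ A, ∑ y ∈ A, c x y * (φ y - φ x) = 0 := by
    have hswap : ∑ x ∈ A, ∑ y ∈ A, c x y * (φ y - φ x) =
        -∑ x ∈ A, ∑ y ∈ A, c x y * (φ y - φ x) := by
      conv_lhs => rw [Finset.sum_comm]
      rw [← Finset.sum_neg_distrib]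
      refine Finset.sum_congr rfl fun y _ => ?_
      rw [← Finset.sum_neg_distrib]
      exact Finset.sum_congr rfl fun x _ => by rw [hsymm]; ring
    linarith
  calc ∑ x ∈ A, ∑ y ∈ Aᶜ, c x y * (φ y - φ x)
      = ∑ x ∈ A, laplacian c φ x := by
        simp only [laplacian, ← Finset.sum_add_sum_compl A, Finset.sum_add_distrib, hinner,
          zero_add]
    _ = laplacian c φ u := Finset.sum_eq_single_of_mem u huA fun x hx hxu =>
        hharm x hxu (ne_of_mem_of_not_mem hx hvA)

end Dirichlet

section Potential

variable {α : Type} [Fintype α] {c : α → α → ℝ} {adj : α → α → Prop}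

theorem exists_abs_sub_le_mul_sqrt_dirichletForm (hc : ∀ x y, 0 ≤ c x y)
    (hpos : ∀ x y, adj x y → 0 < c x y) {u y : α} {p : List α}
    (hp : IsPathBetween adj u y p) :
    ∃ K, ∀ ψ : α → ℝ, |ψ y - ψ u| ≤ K * √(dirichletForm c ψ ψ) := by
  refine hp.induction (fun y => ∃ K, ∀ ψ : α → ℝ, |ψ y - ψ u| ≤ K * √(dirichletForm c ψ ψ))
    ⟨0, fun ψ => by simp⟩ fun a b hab ⟨K, hK⟩ => ⟨√(2 / c a b) + K, fun ψ => ?_⟩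
  have hcab := hpos a b hab
  have hedge : |ψ b - ψ a| ≤ √(2 / c a b) * √(dirichletForm c ψ ψ) := by
    rw [← Real.sqrt_sq_eq_abs, ← Real.sqrt_mul (by positivity)]
    refine Real.sqrt_le_sqrt ?_
    rw [div_mul_eq_mul_div, le_div_iff₀ hcab]
    linarith [mul_sq_sub_le_dirichletForm hc ψ a b]
  calc |ψ b - ψ u| ≤ |ψ b - ψ a| + |ψ a - ψ u| := abs_sub_le _ _ _
    _ ≤ (√(2 / c a b) + K) * √(dirichletForm c ψ ψ) := by linarith [hK ψ]

/-- Connectivity makes the sublevel sets of the energy compact. -/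
theorem exists_forall_dirichletForm_le (hc : ∀ x y, 0 ≤ c x y)
    (hpos : ∀ x y, adj x y → 0 < c x y) {u v : α}
    (hconn : ∀ y, ∃ p : List α, IsPathBetween adj u y p) (huv : u ≠ v) :
    ∃ φ : α → ℝ, φ u = 0 ∧ φ v = 1 ∧
      ∀ ψ : α → ℝ, ψ u = 0 → ψ v = 1 → dirichletForm c φ φ ≤ dirichletForm c ψ ψ := by
  classical
  choose K hK using fun y => (hconn y).elim fun _ hp =>
    exists_abs_sub_le_mul_sqrt_dirichletForm hc hpos hp
  set φ₀ : α → ℝ := Pi.single v 1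
  set M := dirichletForm c φ₀ φ₀
  set T := {ψ : α → ℝ | ψ u = 0 ∧ ψ v = 1 ∧ dirichletForm c ψ ψ ≤ M}
  have hφ₀ : φ₀ ∈ T := ⟨by simp [φ₀, huv], by simp [φ₀], le_rfl⟩
  have hT : IsCompact T := by
    refine Metric.isCompact_of_isClosed_isBounded ?_ ?_
    · exact (isClosed_eq (continuous_apply u) continuous_const).inter
        ((isClosed_eq (continuous_apply v) continuous_const).inter
        (isClosed_le continuous_dirichletForm_self continuous_const))
    refine isBounded_iff_forall_norm_le.mpr ⟨∑ y, |K y| * √M, fun ψ ⟨hu, _, hM⟩ => ?_⟩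
    refine (pi_norm_le_iff_of_nonneg (by positivity)).mpr fun y => ?_
    calc ‖ψ y‖ = |ψ y - ψ u| := by simp [hu]
      _ ≤ |K y| * √M := (hK y ψ).trans
          (mul_le_mul (le_abs_self _) (Real.sqrt_le_sqrt hM) (Real.sqrt_nonneg _) (abs_nonneg _))
      _ ≤ ∑ y, |K y| * √M :=
          Finset.single_le_sum (f := fun y => |K y| * √M) (fun y _ => by positivity)
            (Finset.mem_univ y)
  obtain ⟨φ, ⟨hu, hv, hφM⟩, hmin⟩ :=
    hT.exists_isMinOn ⟨φ₀, hφ₀⟩ continuous_dirichletForm_self.continuousOn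
  refine ⟨φ, hu, hv, fun ψ hψu hψv => ?_⟩
  by_cases hψ : dirichletForm c ψ ψ ≤ M
  · exact hmin ⟨hψu, hψv, hψ⟩
  · linarith

theorem exists_laplacian_eq_zero (hc : ∀ x y, 0 ≤ c x y) (hsymm : ∀ x y, c x y = c y x)
    (hpos : ∀ x y, adj x y → 0 < c x y) {u v : α}
    (hconn : ∀ y, ∃ p : List α, IsPathBetween adj u y p) (huv : u ≠ v) :
    ∃ φ : α → ℝ, φ u = 0 ∧ φ v = 1 ∧ ∀ x, x ≠ u → x ≠ v → laplacian c φ x = 0 := by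
  obtain ⟨φ, hu, hv, hmin⟩ := exists_forall_dirichletForm_le hc hpos hconn huv
  exact ⟨φ, hu, hv, fun x hxu hxv => laplacian_eq_zero_of_forall_le hsymm
    (fun ψ hψu hψv => hmin ψ (hψu.trans hu) (hψv.trans hv)) hxu hxv⟩

theorem dirichletForm_self_pos (hc : ∀ x y, 0 ≤ c x y) (hpos : ∀ x y, adj x y → 0 < c x y)
    {u v : α} {p : List α} (hp : IsPathBetween adj u v p) {φ : α → ℝ} (hφ : φ u ≠ φ v) :
    0 < dirichletForm c φ φ := by
  by_contra! h
  refine hφ (hp.induction (fun y => φ u = φ y) rfl fun a b hab hφa => hφa.trans ?_)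
  have hsq : c a b * (φ b - φ a) ^ 2 ≤ 0 :=
    (mul_sq_sub_le_dirichletForm hc φ a b).trans (by linarith)
  have := pow_eq_zero_iff (n := 2) two_ne_zero |>.mp
    (le_antisymm (nonpos_of_mul_nonpos_right hsq (hpos a b hab)) (sq_nonneg _))
  linarith

end Potential

section UnitFlow

variable {α : Type} {adj : α → α → Prop} {r : α → α → ℝ}

open Classical in
noncomputable def conductance (adj : α → α → Prop) (r : α → α → ℝ) (x y : α) : ℝ :=
  if adj x y then (r x y)⁻¹ else 0

theorem conductance_nonneg (hrpos : ∀ x y, adj x y → 0 < r x y) (x y : α) :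
    0 ≤ conductance adj r x y := by
  unfold conductance
  split_ifs with h
  exacts [(inv_pos.mpr (hrpos x y h)).le, le_rfl]

theorem conductance_pos (hrpos : ∀ x y, adj x y → 0 < r x y) {x y : α} (h : adj x y) :
    0 < conductance adj r x y := by
  simpa [conductance, h] using hrpos x y h

theorem conductance_symm (hadj : ∀ x y, adj x y → adj y x) (hrsym : ∀ x y, r x y = r y x)
    (x y : α) : conductance adj r x y = conductance adj r y x := by
  by_cases h : adj x y
  · simp [conductance, h, hadj x y h, hrsym x y]
  · simp [conductance, h, mt (hadj y x) h]

theorem effRes_le_flowEnergy [Fintype α] (hrpos : ∀ x y, adj x y → 0 < r x y) {u v : α}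
    {θ : α → α → ℝ} (hθ : IsUnitFlow adj u v θ) : effRes adj r u v ≤ flowEnergy r θ := by
  refine csInf_le ⟨0, ?_⟩ ⟨θ, hθ, rfl⟩
  rintro _ ⟨θ', hθ', rfl⟩
  refine mul_nonneg (by norm_num) (Finset.sum_nonneg fun x _ => Finset.sum_nonneg fun y _ => ?_)
  by_cases h : adj x y
  · exact mul_nonneg (hrpos x y h).le (sq_nonneg _)
  · simp [hθ'.2.1 x y h]

theorem isUnitFlow_current [Fintype α] (hadj : ∀ x y, adj x y → adj y x)
    (hrsym : ∀ x y, r x y = r y x) {u v : α} {φ : α → ℝ}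
    (hharm : ∀ x, x ≠ u → x ≠ v → laplacian (conductance adj r) φ x = 0)
    (hE : laplacian (conductance adj r) φ u ≠ 0) :
    IsUnitFlow adj u v fun x y =>
      conductance adj r x y * (φ y - φ x) / laplacian (conductance adj r) φ u := by
  refine ⟨fun x y => ?_, fun x y h => by simp [conductance, h], fun x hxu hxv => ?_, ?_⟩
  · dsimp only
    rw [conductance_symm hadj hrsym]; ring
  · rw [← Finset.sum_div, ← laplacian, hharm x hxu hxv, zero_div]
  · rw [← Finset.sum_div, ← laplacian, div_self hE]

theorem flowEnergy_current [Fintype α] (hrpos : ∀ x y, adj x y → 0 < r x y) (φ : α → ℝ) (E : ℝ) :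
    flowEnergy r (fun x y => conductance adj r x y * (φ y - φ x) / E) =
      dirichletForm (conductance adj r) φ φ / E ^ 2 := by
  simp only [flowEnergy, dirichletForm, Finset.mul_sum, Finset.sum_div]
  refine Finset.sum_congr rfl fun x _ => Finset.sum_congr rfl fun y _ => ?_
  by_cases h : adj x y
  · have := (hrpos x y h).ne'
    simp only [conductance, h, if_true]
    field_simp
  · simp [conductance, h]

theorem effRes_le_inv_dirichletForm [Fintype α] (hadj : ∀ x y, adj x y → adj y x)
    (hrsym : ∀ x y, r x y = r y x) (hrpos : ∀ x y, adj x y → 0 < r x y) {u v : α} {p : List α}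
    (hp : IsPathBetween adj u v p) {φ : α → ℝ} (hu : φ u = 0) (hv : φ v = 1)
    (hharm : ∀ x, x ≠ u → x ≠ v → laplacian (conductance adj r) φ x = 0) :
    effRes adj r u v ≤ (dirichletForm (conductance adj r) φ φ)⁻¹ := by
  have hE := laplacian_eq_dirichletForm (conductance_symm hadj hrsym) hharm hu hv
  have hpos : 0 < dirichletForm (conductance adj r) φ φ :=
    dirichletForm_self_pos (conductance_nonneg hrpos) (fun _ _ => conductance_pos hrpos) hp
      (by simp [hu, hv])
  calc effRes adj r u v ≤ flowEnergy r fun x y =>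
        conductance adj r x y * (φ y - φ x) / laplacian (conductance adj r) φ u :=
        effRes_le_flowEnergy hrpos (isUnitFlow_current hadj hrsym hharm (hE ▸ hpos.ne'))
    _ = (dirichletForm (conductance adj r) φ φ)⁻¹ := by
        rw [flowEnergy_current hrpos, hE]
        field_simp

end UnitFlow

section Levels

/-- The least element of `S` above `t`, or `t` itself if there is none. -/
noncomputable def nextIn (S : Finset ℝ) (t : ℝ) : ℝ :=
  if h : (S.filter (t < ·)).Nonempty then (S.filter (t < ·)).min' h else t

variable {S : Finset ℝ} {t d : ℝ}

theorem nextIn_le (hd : d ∈ S) (htd : t < d) : nextIn S t ≤ d := by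
  have h : (S.filter (t < ·)).Nonempty := ⟨d, Finset.mem_filter.mpr ⟨hd, htd⟩⟩
  rw [nextIn, dif_pos h]
  exact Finset.min'_le _ _ (Finset.mem_filter.mpr ⟨hd, htd⟩)

theorem lt_nextIn (hd : d ∈ S) (htd : t < d) : t < nextIn S t := by
  have h : (S.filter (t < ·)).Nonempty := ⟨d, Finset.mem_filter.mpr ⟨hd, htd⟩⟩
  rw [nextIn, dif_pos h]
  exact (Finset.mem_filter.mp (Finset.min'_mem _ h)).2

theorem nextIn_eq_self (h : ∀ d ∈ S, d ≤ t) : nextIn S t = t := by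
  rw [nextIn, dif_neg]
  rintro ⟨d, hd⟩
  exact (Finset.mem_filter.mp hd).2.not_ge (h d (Finset.mem_filter.mp hd).1)

theorem nextIn_insert_of_lt {a : ℝ} {T : Finset ℝ} (hat : a < t) :
    nextIn (insert a T) t = nextIn T t := by
  simp only [nextIn, Finset.filter_insert, if_neg hat.not_gt]

theorem nextIn_insert_self {a : ℝ} {T : Finset ℝ} (hT : T.Nonempty) (haT : ∀ x ∈ T, a < x) :
    nextIn (insert a T) a = T.min' hT := by
  have hfilter : (insert a T).filter (a < ·) = T := by
    rw [Finset.filter_insert, if_neg (lt_irrefl a), Finset.filter_true_of_mem haT]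
  simp only [nextIn, hfilter, dif_pos hT]

theorem sum_nextIn_sub {a b : ℝ} (ha : a ∈ S) (hb : b ∈ S) (hS : ∀ t ∈ S, a ≤ t ∧ t ≤ b) :
    ∑ t ∈ S, (nextIn S t - t) = b - a := by
  induction S using Finset.induction_on_min generalizing a with
  | empty => simp at ha
  | insert x T hxT ih =>
    have hax : a = x := by
      rcases Finset.mem_insert.mp ha with rfl | haT
      · rfl
      · exact absurd (hS x (Finset.mem_insert_self x T)).1 (hxT a haT).not_ge
    subst hax
    rw [Finset.sum_insert fun h => lt_irrefl a (hxT a h)]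
    rcases T.eq_empty_or_nonempty with rfl | hT
    · simp only [insert_empty_eq, Finset.mem_singleton] at hb
      simp [nextIn_eq_self, hb]
    have hbT : b ∈ T := (Finset.mem_insert.mp hb).resolve_left fun hba =>
      (hxT _ (T.min'_mem hT)).not_ge (hba ▸ (hS _ (Finset.mem_insert_of_mem (T.min'_mem hT))).2)
    rw [nextIn_insert_self hT hxT, Finset.sum_congr rfl fun t ht => by
      rw [nextIn_insert_of_lt (hxT t ht)],
      ih (T.min'_mem hT) hbT fun t ht => ⟨T.min'_le t ht, (hS t (Finset.mem_insert_of_mem ht)).2⟩]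
    ring

theorem sum_nextIn_sub_le {Q : Finset ℝ} (hQS : Q ⊆ S) {lo hi : ℝ} (hlohi : lo ≤ hi)
    (hQ : ∀ t ∈ Q, lo ≤ t ∧ nextIn S t ≤ hi) : ∑ t ∈ Q, (nextIn S t - t) ≤ hi - lo := by
  induction Q using Finset.induction_on_max generalizing hi with
  | empty => simpa using hlohi
  | insert a T hTa ih =>
    rw [Finset.sum_insert fun h => lt_irrefl a (hTa a h)]
    have haS := hQS (Finset.mem_insert_self a T)
    have ha := hQ a (Finset.mem_insert_self a T)
    have hT := ih ((Finset.subset_insert a T).trans hQS) ha.1 fun t ht =>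
      ⟨(hQ t (Finset.mem_insert_of_mem ht)).1, nextIn_le haS (hTa t ht)⟩
    linarith [ha.2]

end Levels

section Crossing

variable {α : Type*} {φ : α → ℝ} {t : ℝ} {x y : α}

def CrossesLevel (φ : α → ℝ) (t : ℝ) (x y : α) : Prop :=
  min (φ x) (φ y) ≤ t ∧ t < max (φ x) (φ y)

noncomputable instance : Decidable (CrossesLevel φ t x y) :=
  inferInstanceAs (Decidable (_ ∧ _))

theorem crossesLevel_iff :
    CrossesLevel φ t x y ↔ (φ x ≤ t ∧ t < φ y) ∨ (φ y ≤ t ∧ t < φ x) := by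
  simp only [CrossesLevel, min_le_iff, lt_max_iff]
  grind

theorem CrossesLevel.symm (h : CrossesLevel φ t x y) : CrossesLevel φ t y x := by
  rw [CrossesLevel, min_comm, max_comm]
  exact h

/-- The levels are `0` and the values of `φ` in `(0, 1)`, each weighted by the gap to the next
value in `[0, 1]`. -/
theorem exists_levels [Fintype α] (φ : α → ℝ) :
    ∃ (L : Finset ℝ) (ℓ : ℝ → ℝ), (∀ t ∈ L, 0 ≤ t ∧ t < 1 ∧ 0 < ℓ t) ∧ ∑ t ∈ L, ℓ t = 1 ∧
      ∀ x y, ∑ t ∈ L with CrossesLevel φ t x y, ℓ t ≤ |φ y - φ x| := by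
  classical
  set S : Finset ℝ := insert 0 (insert 1 ((Finset.univ.image φ).filter fun s => 0 ≤ s ∧ s ≤ 1))
  have hS : ∀ s ∈ S, 0 ≤ s ∧ s ≤ 1 := by
    intro s hs
    simp only [S, Finset.mem_insert, Finset.mem_filter] at hs
    rcases hs with rfl | rfl | ⟨-, hs⟩
    · norm_num
    · norm_num
    · exact hs
  have h0 : (0 : ℝ) ∈ S := Finset.mem_insert_self _ _
  have h1 : (1 : ℝ) ∈ S := Finset.mem_insert_of_mem (Finset.mem_insert_self _ _)
  have hφS : ∀ x, 0 ≤ φ x → φ x ≤ 1 → φ x ∈ S := fun x h0 h1 => by simp [S, h0, h1]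
  refine ⟨S.erase 1, fun t => nextIn S t - t, fun t ht => ?_, ?_, fun x y => ?_⟩
  · obtain ⟨hne, htS⟩ := Finset.mem_erase.mp ht
    have ht1 : t < 1 := lt_of_le_of_ne (hS t htS).2 hne
    exact ⟨(hS t htS).1, ht1, sub_pos.mpr (lt_nextIn h1 ht1)⟩
  · rw [Finset.sum_erase S (by simp [nextIn_eq_self fun d hd => (hS d hd).2]),
      sum_nextIn_sub h0 h1 hS, sub_zero]
  · rw [← max_sub_min_eq_abs]
    refine sum_nextIn_sub_le ((Finset.filter_subset _ _).trans (Finset.erase_subset _ _))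
      min_le_max fun t ht => ?_
    rw [Finset.mem_filter, Finset.mem_erase] at ht
    obtain ⟨⟨hne, htS⟩, hmin, hmax⟩ := ht
    have ht1 : t < 1 := lt_of_le_of_ne (hS t htS).2 hne
    refine ⟨hmin, ?_⟩
    by_cases hle : max (φ x) (φ y) ≤ 1
    · refine nextIn_le ?_ hmax
      have hnonneg : 0 ≤ max (φ x) (φ y) := (hS t htS).1.trans hmax.le
      rcases max_choice (φ x) (φ y) with h | h <;> rw [h] at hle hnonneg ⊢ <;>
        exact hφS _ hnonneg hle
    · exact (nextIn_le h1 ht1).trans (not_le.mp hle).le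

end Crossing

section LevelResistance

variable {α : Type} {adj : α → α → Prop} {φ : α → ℝ} {t : ℝ} {ρ : α → α → ℝ} {p : List α}

/-- The resistance per unit of potential drop of the edges of `p` that cross level `t`. -/
noncomputable def levelRes (φ : α → ℝ) (t : ℝ) (ρ : α → α → ℝ) (p : List α) : ℝ :=
  pathSum p fun x y => if CrossesLevel φ t x y then ρ x y / |φ y - φ x| else 0

theorem levelRes_term_nonneg (hp : p.IsChain adj) (hρ : ∀ x y, adj x y → 0 < ρ x y) :
    ∀ e ∈ p.zip p.tail,
      0 ≤ if CrossesLevel φ t e.1 e.2 then ρ e.1 e.2 / |φ e.2 - φ e.1| else 0 := fun e he => by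
  have := hρ _ _ (List.isChain_iff_forall_mem_zip_tail.mp hp e he)
  split_ifs <;> positivity

theorem div_abs_le_levelRes (hp : p.IsChain adj) (hρ : ∀ x y, adj x y → 0 < ρ x y)
    {e : α × α} (he : e ∈ p.zip p.tail) (hcross : CrossesLevel φ t e.1 e.2) :
    ρ e.1 e.2 / |φ e.2 - φ e.1| ≤ levelRes φ t ρ p := by
  simpa [levelRes, hcross] using le_pathSum
    (w := fun x y => if CrossesLevel φ t x y then ρ x y / |φ y - φ x| else 0)
    (levelRes_term_nonneg hp hρ) he

theorem levelRes_nonneg (hp : p.IsChain adj) (hρ : ∀ x y, adj x y → 0 < ρ x y) :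
    0 ≤ levelRes φ t ρ p :=
  pathSum_nonneg (levelRes_term_nonneg hp hρ)

theorem levelRes_pos (hp : p.IsChain adj) (hρ : ∀ x y, adj x y → 0 < ρ x y)
    (hcross : ∃ e ∈ p.zip p.tail, CrossesLevel φ t e.1 e.2) : 0 < levelRes φ t ρ p := by
  obtain ⟨e, he, hcr⟩ := hcross
  refine lt_of_lt_of_le (div_pos (hρ _ _ (List.isChain_iff_forall_mem_zip_tail.mp hp e he))
    (abs_pos.mpr fun h0 => ?_)) (div_abs_le_levelRes hp hρ he hcr)
  rcases crossesLevel_iff.mp hcr with h | h <;> linarith [h.1, h.2]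

theorem sum_mul_levelRes_le_pathSum {L : Finset ℝ} {ℓ : ℝ → ℝ}
    (hL : ∀ x y, ∑ t ∈ L with CrossesLevel φ t x y, ℓ t ≤ |φ y - φ x|)
    (hp : p.IsChain adj) (hρ : ∀ x y, adj x y → 0 < ρ x y) :
    ∑ t ∈ L, ℓ t * levelRes φ t ρ p ≤ pathSum p ρ := by
  simp only [levelRes, sum_mul_pathSum]
  refine pathSum_le_pathSum fun e he => ?_
  have hρe := hρ _ _ (List.isChain_iff_forall_mem_zip_tail.mp hp e he)
  simp only [mul_ite, mul_zero]
  rw [← Finset.sum_filter, ← Finset.sum_mul]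
  rcases (abs_nonneg (φ e.2 - φ e.1)).eq_or_lt with hzero | hpos
  · simp [← hzero, hρe.le]
  calc (∑ t ∈ L with CrossesLevel φ t e.1 e.2, ℓ t) * (ρ e.1 e.2 / |φ e.2 - φ e.1|)
      ≤ |φ e.2 - φ e.1| * (ρ e.1 e.2 / |φ e.2 - φ e.1|) := by gcongr; exact hL _ _
    _ = ρ e.1 e.2 := by field_simp

theorem inv_levelRes_le_sum_cut [Fintype α] [DecidableEq α] (hadj : ∀ x y, adj x y → adj y x)
    (hp : p.IsChain adj) (hρ : ∀ x y, adj x y → 0 < ρ x y) (hρsym : ∀ x y, ρ x y = ρ y x)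
    (hcross : ∃ e ∈ p.zip p.tail, CrossesLevel φ t e.1 e.2) {A : Finset α}
    (hA : ∀ x, x ∈ A ↔ φ x ≤ t) :
    (levelRes φ t ρ p)⁻¹ ≤ ∑ x ∈ A, ∑ y ∈ Aᶜ, conductance adj ρ x y * (φ y - φ x) := by
  obtain ⟨e, he, hcr⟩ := hcross
  have he_adj := List.isChain_iff_forall_mem_zip_tail.mp hp e he
  have hle := div_abs_le_levelRes hp hρ he hcr
  obtain ⟨x, y, hxy, hx, hy, hterm⟩ : ∃ x y, adj x y ∧ φ x ≤ t ∧ t < φ y ∧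
      ρ x y / (φ y - φ x) ≤ levelRes φ t ρ p := by
    rcases crossesLevel_iff.mp hcr with ⟨h1, h2⟩ | ⟨h1, h2⟩
    · exact ⟨e.1, e.2, he_adj, h1, h2, by rwa [abs_of_pos (by linarith)] at hle⟩
    · refine ⟨e.2, e.1, hadj _ _ he_adj, h1, h2, ?_⟩
      rwa [abs_of_neg (by linarith), neg_sub, hρsym] at hle
  have hnonneg : ∀ a ∈ A, ∀ b ∈ Aᶜ, 0 ≤ conductance adj ρ a b * (φ b - φ a) := fun a ha b hb => by
    rw [Finset.mem_compl, hA, not_le] at hb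
    exact mul_nonneg (conductance_nonneg hρ a b) (by linarith [(hA a).mp ha])
  calc (levelRes φ t ρ p)⁻¹ ≤ (ρ x y / (φ y - φ x))⁻¹ :=
        inv_anti₀ (div_pos (hρ x y hxy) (by linarith)) hterm
    _ = conductance adj ρ x y * (φ y - φ x) := by simp [conductance, hxy, div_eq_mul_inv, mul_comm]
    _ ≤ ∑ b ∈ Aᶜ, conductance adj ρ x b * (φ b - φ x) :=
        Finset.single_le_sum (hnonneg x ((hA x).mpr hx)) (by simpa [hA] using hy)
    _ ≤ _ := Finset.single_le_sum (f := fun a => ∑ b ∈ Aᶜ, conductance adj ρ a b * (φ b - φ a))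
        (fun a ha => Finset.sum_nonneg (hnonneg a ha)) ((hA x).mpr hx)

end LevelResistance

section Splitting

variable {α : Type} {adj : α → α → Prop} {r : α → α → ℝ}

def IsSplitting (adj : α → α → Prop) (r : α → α → ℝ) (Ps : Finset (List α))
    (ρ : List α → α → α → ℝ) : Prop :=
  (∀ p ∈ Ps, ∀ x y, adj x y → 0 < ρ p x y) ∧ (∀ p ∈ Ps, ∀ x y, ρ p x y = ρ p y x) ∧
    ∀ x y, adj x y → ∑ p ∈ Ps, (ρ p x y)⁻¹ ≤ (r x y)⁻¹

theorem restrictedResP_eq_sInf_image (adj : α → α → Prop) (r : α → α → ℝ)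
    (Ps : Finset (List α)) :
    restrictedResP adj r Ps =
      sInf ((fun ρ => parallelSum Ps fun p => pathSum p (ρ p)) ''
        {ρ | IsSplitting adj r Ps ρ}) := by
  simp only [restrictedResP, IsSplitting, Set.image, Set.mem_ofPred_eq, and_assoc, eq_comm,
    parallelSum]

theorem isSplitting_const_mul (hrsym : ∀ x y, r x y = r y x) (hrpos : ∀ x y, adj x y → 0 < r x y)
    {Ps : Finset (List α)} (hPs : Ps.Nonempty) :
    IsSplitting adj r Ps fun _ x y => Ps.card * r x y := by
  have hcard : (0 : ℝ) < Ps.card := by exact_mod_cast hPs.card_pos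
  refine ⟨fun _ _ x y h => mul_pos hcard (hrpos x y h), fun _ _ x y => by simp only [hrsym x y],
    fun x y _ => ?_⟩
  rw [Finset.sum_const, nsmul_eq_mul, mul_inv, ← mul_assoc, mul_inv_cancel₀ hcard.ne', one_mul]

theorem IsSplitting.sum_conductance_le {Ps : Finset (List α)} {ρ : List α → α → α → ℝ}
    (hρ : IsSplitting adj r Ps ρ) (x y : α) :
    ∑ p ∈ Ps, conductance adj (ρ p) x y ≤ conductance adj r x y := by
  by_cases h : adj x y
  · simpa [conductance, h] using hρ.2.2 x y h
  · simp [conductance, h]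

end Splitting

section LevelBound

variable {α : Type} [Fintype α] {adj : α → α → Prop} {r : α → α → ℝ} {u v : α} {φ : α → ℝ}
  {t : ℝ} {Ps : Finset (List α)} {ρ : List α → α → α → ℝ}

/-- The whole current flows through the cut `{φ ≤ t}`, whose edges each path of `Ps` meets, and
the splitting shares out the conductance of every cut edge among the paths. -/
theorem sum_inv_levelRes_le_dirichletForm (hadj : ∀ x y, adj x y → adj y x)
    (hrsym : ∀ x y, r x y = r y x) (hu : φ u = 0) (hv : φ v = 1)
    (hharm : ∀ x, x ≠ u → x ≠ v → laplacian (conductance adj r) φ x = 0)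
    (ht0 : 0 ≤ t) (ht1 : t < 1) (hρ : IsSplitting adj r Ps ρ) (hPs : ∀ p ∈ Ps, p.IsChain adj)
    (hcross : ∀ p ∈ Ps, ∃ e ∈ p.zip p.tail, CrossesLevel φ t e.1 e.2) :
    ∑ p ∈ Ps, (levelRes φ t (ρ p) p)⁻¹ ≤ dirichletForm (conductance adj r) φ φ := by
  classical
  set A : Finset α := {x | φ x ≤ t}
  have hA : ∀ x, x ∈ A ↔ φ x ≤ t := by simp [A]
  calc ∑ p ∈ Ps, (levelRes φ t (ρ p) p)⁻¹
      ≤ ∑ p ∈ Ps, ∑ x ∈ A, ∑ y ∈ Aᶜ, conductance adj (ρ p) x y * (φ y - φ x) :=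
        Finset.sum_le_sum fun p hp => inv_levelRes_le_sum_cut hadj (hPs p hp) (hρ.1 p hp)
          (hρ.2.1 p hp) (hcross p hp) hA
    _ = ∑ x ∈ A, ∑ y ∈ Aᶜ, (∑ p ∈ Ps, conductance adj (ρ p) x y) * (φ y - φ x) := by
        rw [Finset.sum_comm]
        refine Finset.sum_congr rfl fun x _ => ?_
        rw [Finset.sum_comm]
        simp only [Finset.sum_mul]
    _ ≤ ∑ x ∈ A, ∑ y ∈ Aᶜ, conductance adj r x y * (φ y - φ x) := by
        refine Finset.sum_le_sum fun x hx => Finset.sum_le_sum fun y hy => ?_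
        rw [Finset.mem_compl, hA, not_le] at hy
        exact mul_le_mul_of_nonneg_right (hρ.sum_conductance_le x y)
          (by linarith [(hA x).mp hx])
    _ = laplacian (conductance adj r) φ u :=
        sum_sum_compl_mul_sub_eq_laplacian (conductance_symm hadj hrsym) hharm
          (by simp [hA, hu, ht0]) (by simp [hA, hv, ht1])
    _ = dirichletForm (conductance adj r) φ φ :=
        laplacian_eq_dirichletForm (conductance_symm hadj hrsym) hharm hu hv

theorem inv_dirichletForm_le_parallelSum_levelRes (hadj : ∀ x y, adj x y → adj y x)
    (hrsym : ∀ x y, r x y = r y x) (hu : φ u = 0) (hv : φ v = 1)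
    (hharm : ∀ x, x ≠ u → x ≠ v → laplacian (conductance adj r) φ x = 0)
    (ht0 : 0 ≤ t) (ht1 : t < 1) (hρ : IsSplitting adj r Ps ρ) (hPs : ∀ p ∈ Ps, p.IsChain adj)
    (hne : Ps.Nonempty) (hcross : ∀ p ∈ Ps, ∃ e ∈ p.zip p.tail, CrossesLevel φ t e.1 e.2) :
    (dirichletForm (conductance adj r) φ φ)⁻¹ ≤
      parallelSum Ps fun p => levelRes φ t (ρ p) p :=
  inv_anti₀ (Finset.sum_pos (fun p hp => inv_pos.mpr
      (levelRes_pos (hPs p hp) (hρ.1 p hp) (hcross p hp))) hne)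
    (sum_inv_levelRes_le_dirichletForm hadj hrsym hu hv hharm ht0 ht1 hρ hPs hcross)

end LevelBound

/-- Otherwise the chosen non-crossing paths would cover a path from `u` to `v`, which has to
cross every level between `φ u` and `φ v`. -/
theorem exists_forall_crossesLevel {α : Type} {ι : Type*} {adj : α → α → Prop}
    {Ps : ι → Finset (List α)} {u v : α} {φ : α → ℝ} {t : ℝ} (hu : φ u ≤ t) (hv : t < φ v)
    (hcover : ∀ f : ι → List α, (∀ i, f i ∈ Ps i) →
      ∃ q : List α, IsPathBetween adj u v q ∧
        ∀ e ∈ q.zip q.tail, ∃ i, e ∈ (f i).zip (f i).tail ∨ (e.2, e.1) ∈ (f i).zip (f i).tail) :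
    ∃ i, ∀ p ∈ Ps i, ∃ e ∈ p.zip p.tail, CrossesLevel φ t e.1 e.2 := by
  by_contra! h
  choose f hf hfcross using h
  obtain ⟨q, ⟨-, hq_head, hq_last, -⟩, hq⟩ := hcover f hf
  obtain ⟨e, he, h1, h2⟩ := List.exists_mem_zip_tail_of_head?_of_getLast? (P := (φ · ≤ t))
    hq_head hq_last hu (not_le.mpr hv)
  have hcr : CrossesLevel φ t e.1 e.2 := crossesLevel_iff.mpr (Or.inl ⟨h1, not_le.mp h2⟩)
  obtain ⟨i, hi | hi⟩ := hq e he
  · exact hfcross i e hi hcr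
  · exact hfcross i _ hi hcr.symm

theorem inv_dirichletForm_le_sum_parallelSum {α : Type} [Fintype α] {ι : Type*} [Fintype ι]
    {adj : α → α → Prop} {r : α → α → ℝ} (hadj : ∀ x y, adj x y → adj y x)
    (hrsym : ∀ x y, r x y = r y x) {u v : α} {φ : α → ℝ} (hu : φ u = 0) (hv : φ v = 1)
    (hharm : ∀ x, x ≠ u → x ≠ v → laplacian (conductance adj r) φ x = 0)
    {Ps : ι → Finset (List α)} (hpath : ∀ i, ∀ p ∈ Ps i, p.IsChain adj)
    (hne : ∀ i, (Ps i).Nonempty)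
    (hcover : ∀ f : ι → List α, (∀ i, f i ∈ Ps i) →
      ∃ q : List α, IsPathBetween adj u v q ∧
        ∀ e ∈ q.zip q.tail, ∃ i, e ∈ (f i).zip (f i).tail ∨ (e.2, e.1) ∈ (f i).zip (f i).tail)
    {ρ : ι → List α → α → α → ℝ} (hρ : ∀ i, IsSplitting adj r (Ps i) (ρ i)) :
    (dirichletForm (conductance adj r) φ φ)⁻¹ ≤
      ∑ i, parallelSum (Ps i) fun p => pathSum p (ρ i p) := by
  classical
  obtain ⟨L, ℓ, hL, hsum, hedge⟩ := exists_levels φ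
  set E := dirichletForm (conductance adj r) φ φ
  let Crosses i t := ∀ p ∈ Ps i, ∃ e ∈ p.zip p.tail, CrossesLevel φ t e.1 e.2
  let a i t p := ℓ t * levelRes φ t (ρ i p) p
  have ha : ∀ i, ∀ t ∈ L, ∀ p ∈ Ps i, 0 ≤ a i t p := fun i t ht p hp =>
    mul_nonneg (hL t ht).2.2.le (levelRes_nonneg (hpath i p hp) ((hρ i).1 p hp))
  calc E⁻¹ = ∑ t ∈ L, ℓ t * E⁻¹ := by rw [← Finset.sum_mul, hsum, one_mul]
    _ ≤ ∑ t ∈ L, ∑ i, if Crosses i t then parallelSum (Ps i) (a i t) else 0 := by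
        refine Finset.sum_le_sum fun t ht => ?_
        obtain ⟨i, hi⟩ := exists_forall_crossesLevel (hu ▸ (hL t ht).1) (hv ▸ (hL t ht).2.1) hcover
        calc ℓ t * E⁻¹ ≤ parallelSum (Ps i) (a i t) := by
              rw [parallelSum_const_mul]
              exact mul_le_mul_of_nonneg_left (inv_dirichletForm_le_parallelSum_levelRes hadj hrsym
                hu hv hharm (hL t ht).1 (hL t ht).2.1 (hρ i) (hpath i) (hne i) hi)
                (hL t ht).2.2.le
          _ ≤ ∑ i, if Crosses i t then parallelSum (Ps i) (a i t) else 0 := by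
              refine (if_pos hi).symm.le.trans (Finset.single_le_sum
                (f := fun j => if Crosses j t then parallelSum (Ps j) (a j t) else 0)
                (fun j _ => ?_) (Finset.mem_univ i))
              split_ifs
              exacts [parallelSum_nonneg (ha j t ht), le_rfl]
    _ = ∑ i, ∑ t ∈ L with Crosses i t, parallelSum (Ps i) (a i t) := by
        rw [Finset.sum_comm]
        simp only [Finset.sum_filter]
    _ ≤ ∑ i, parallelSum (Ps i) fun p => pathSum p (ρ i p) := by
        refine Finset.sum_le_sum fun i _ => sum_parallelSum_le_parallelSum_of_sum_le _ _
          (fun t ht p hp => ?_) fun p hp => ?_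
        · obtain ⟨htL, hti⟩ := Finset.mem_filter.mp ht
          exact mul_pos (hL t htL).2.2 (levelRes_pos (hpath i p hp) ((hρ i).1 p hp) (hti p hp))
        · exact (Finset.sum_le_sum_of_subset_of_nonneg (Finset.filter_subset _ L)
            fun t ht _ => ha i t ht p hp).trans
            (sum_mul_levelRes_le_pathSum hedge (hpath i p hp) ((hρ i).1 p hp))

theorem le_sum_sInf_image {ι β : Type*} [Fintype ι] {T : ι → Set β} (f : ι → β → ℝ)
    (hT : ∀ i, (T i).Nonempty) {a : ℝ} (h : ∀ b : ι → β, (∀ i, b i ∈ T i) → a ≤ ∑ i, f i (b i)) :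
    a ≤ ∑ i, sInf (f i '' T i) := by
  refine le_of_forall_pos_lt_add fun ε hε => ?_
  set n : ℝ := (Fintype.card ι : ℝ)
  have hδ : 0 < ε / (n + 1) := by positivity
  have hb : ∀ i, ∃ b ∈ T i, f i b < sInf (f i '' T i) + ε / (n + 1) := fun i => by
    obtain ⟨_, ⟨b, hb, rfl⟩, hlt⟩ := Real.lt_sInf_add_pos ((hT i).image (f i)) hδ
    exact ⟨b, hb, hlt⟩
  choose b hbT hlt using hb
  have hnε : n * (ε / (n + 1)) < ε := by
    rw [mul_div_assoc', div_lt_iff₀ (by positivity)]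
    nlinarith
  calc a ≤ ∑ i, f i (b i) := h b hbT
    _ ≤ ∑ i, (sInf (f i '' T i) + ε / (n + 1)) := Finset.sum_le_sum fun i _ => (hlt i).le
    _ = ∑ i, sInf (f i '' T i) + n * (ε / (n + 1)) := by
        rw [Finset.sum_add_distrib, Finset.sum_const, Finset.card_univ, nsmul_eq_mul]
    _ < ∑ i, sInf (f i '' T i) + ε := by linarith

/-- Generalized series law (Lemma 2.4): if `Ps 1, ..., Ps k` are nonempty collections of paths
such that for every choice of one path from each collection the union of the chosen paths
(as subgraphs) contains a path from `u` to `v`, then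
`R(u, v) ≤ ∑ i, R(Ps i)`. -/
theorem effRes_le_sum_restricted
    (adj : V → V → Prop) (r : V → V → ℝ)
    (hadj : ∀ x y, adj x y → adj y x)
    (hrsym : ∀ x y, r x y = r y x)
    (hrpos : ∀ x y, adj x y → 0 < r x y)
    (hconn : ∀ x y : V, ∃ p : List V, IsPathBetween adj x y p)
    (u v : V) (huv : u ≠ v)
    (k : ℕ) (Ps : Fin k → Finset (List V))
    (hpath : ∀ i, ∀ p ∈ Ps i, IsPath adj p)
    (hnonempty : ∀ i, (Ps i).Nonempty)
    (hcover : ∀ f : Fin k → List V, (∀ i, f i ∈ Ps i) →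
      ∃ q : List V, IsPathBetween adj u v q ∧
        ∀ e ∈ q.zip q.tail, ∃ i, e ∈ (f i).zip (f i).tail ∨
          (e.2, e.1) ∈ (f i).zip (f i).tail) :
    effRes adj r u v ≤ ∑ i, restrictedResP adj r (Ps i) := by
  obtain ⟨φ, hu, hv, hharm⟩ := exists_laplacian_eq_zero (conductance_nonneg hrpos)
    (conductance_symm hadj hrsym) (fun _ _ => conductance_pos hrpos) (hconn u) huv
  obtain ⟨p, hp⟩ := hconn u v
  simp only [restrictedResP_eq_sInf_image]
  refine (effRes_le_inv_dirichletForm hadj hrsym hrpos hp hu hv hharm).trans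
    (le_sum_sInf_image _ (fun i => ?_) fun ρ hρ => ?_)
  · exact ⟨_, isSplitting_const_mul hrsym hrpos (hnonempty i)⟩
  · exact inv_dirichletForm_le_sum_parallelSum hadj hrsym hu hv hharm
      (fun i p hp => (hpath i p hp).2) hnonempty hcover hρ
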